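/- arXiv:1604.02172 — 2 statements merged into one kernel-verified Lean document; each statement's English description precedes it below -/
import Mathlib

section
/- Let v ∈ ℝⁿ, and let v₊ = max(v, 0) and v₋ = max(−v, 0) denote the entrywise positive and negative parts of v. Then the following are equivalent for the matrix A = I − vvᵀ: (a) A is copositive; (b) A is SPN; (c) ‖v₋‖ ≤ 1 and ‖v₊‖ ≤ 1, where ‖·‖ denotes the Euclidean norm. -/
/-!
SPN matrices are copositive, as `xᵀPx ≥ 0` and `xᵀNx ≥ 0` for `x ≥ 0`. Testing copositivity of
`1 - vvᵀ` on `v⁺` gives `‖v⁺‖² - ‖v⁺‖⁴ ≥ 0`, because `v ⬝ᵥ v⁺ = ‖v⁺‖²`; replacing `v` by `-v`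
gives the bound for `v⁻`. Conversely, `v = v⁺ - v⁻` with disjointly supported parts, so
`1 - vvᵀ = (1 - v⁺v⁺ᵀ - v⁻v⁻ᵀ) + (v⁺v⁻ᵀ + v⁻v⁺ᵀ)`. The second summand is entrywise nonnegative,
and the first is positive semidefinite: Cauchy–Schwarz on the two supports bounds
`(v⁺ ⬝ᵥ x)² + (v⁻ ⬝ᵥ x)²` by `‖x‖²` once `‖v⁺‖, ‖v⁻‖ ≤ 1`.
-/

open Matrix

/-- A real symmetric matrix `A` is *copositive* if `xᵀAx ≥ 0` for every
entrywise nonnegative vector `x`. -/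
def Copositive {ι : Type*} [Fintype ι] (A : Matrix ι ι ℝ) : Prop :=
  ∀ x : ι → ℝ, (∀ i, 0 ≤ x i) → 0 ≤ x ⬝ᵥ A.mulVec x

/-- A real symmetric matrix is *SPN* if it is the sum of a positive semidefinite
matrix and a symmetric entrywise nonnegative matrix. -/
def IsSPN {ι : Type*} [Fintype ι] (A : Matrix ι ι ℝ) : Prop :=
  ∃ P N : Matrix ι ι ℝ, P.PosSemidef ∧ N.IsSymm ∧ (∀ i j, 0 ≤ N i j) ∧ A = P + N

section

variable {ι : Type*} [Fintype ι]

theorem IsSPN.copositive {A : Matrix ι ι ℝ} (hA : IsSPN A) : Copositive A := by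
  obtain ⟨P, N, hP, -, hN, rfl⟩ := hA
  intro x hx
  have hPx : 0 ≤ x ⬝ᵥ P *ᵥ x := by simpa using hP.dotProduct_mulVec_nonneg x
  have hNx : 0 ≤ x ⬝ᵥ N *ᵥ x :=
    Finset.sum_nonneg fun i _ => mul_nonneg (hx i)
      (Finset.sum_nonneg fun j _ => mul_nonneg (hN i j) (hx j))
  rw [add_mulVec, dotProduct_add]
  exact add_nonneg hPx hNx

theorem dotProduct_vecMulVec_self_mulVec {R : Type*} [CommSemiring R] (w x : ι → R) :
    x ⬝ᵥ vecMulVec w w *ᵥ x = (w ⬝ᵥ x) ^ 2 := by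
  rw [vecMulVec_mulVec, op_smul_eq_smul, dotProduct_smul, dotProduct_comm, smul_eq_mul, sq]

theorem negPart_dotProduct_posPart (v : ι → ℝ) : v⁻ ⬝ᵥ v⁺ = 0 := by
  refine Finset.sum_eq_zero fun i _ => ?_
  rcases le_total 0 (v i) with h | h
  · simp [negPart_eq_zero.2 h]
  · simp [posPart_eq_zero.2 h]

theorem dotProduct_posPart (v : ι → ℝ) : v ⬝ᵥ v⁺ = v⁺ ⬝ᵥ v⁺ := by
  calc v ⬝ᵥ v⁺ = (v⁺ - v⁻) ⬝ᵥ v⁺ := by rw [posPart_sub_negPart]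
    _ = v⁺ ⬝ᵥ v⁺ := by rw [sub_dotProduct, negPart_dotProduct_posPart, sub_zero]

theorem sq_dotProduct_le_of_support_subset {p : ι → ℝ} {s : Finset ι} (hp : ∀ i ∉ s, p i = 0)
    (x : ι → ℝ) : (p ⬝ᵥ x) ^ 2 ≤ (p ⬝ᵥ p) * ∑ i ∈ s, x i ^ 2 := by
  have hsum (f : ι → ℝ) : ∑ i ∈ s, p i * f i = p ⬝ᵥ f :=
    Finset.sum_subset s.subset_univ fun i _ hi => by simp [hp i hi]
  simpa only [hsum, sq] using Finset.sum_mul_sq_le_sq_mul_sq s p x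

theorem sq_dotProduct_add_sq_dotProduct_le {p m : ι → ℝ} (hp : p ⬝ᵥ p ≤ 1) (hm : m ⬝ᵥ m ≤ 1)
    (hpm : ∀ i, p i ≠ 0 → m i = 0) (x : ι → ℝ) :
    (p ⬝ᵥ x) ^ 2 + (m ⬝ᵥ x) ^ 2 ≤ x ⬝ᵥ x := by
  classical
  set s := Finset.univ.filter fun i => p i ≠ 0
  have hps := sq_dotProduct_le_of_support_subset (p := p) (s := s) (by simp [s]) x
  have hmsc := sq_dotProduct_le_of_support_subset (s := sᶜ)
    (fun i hi => hpm i (by simpa [s] using hi)) x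
  have hsplit : ∑ i ∈ s, x i ^ 2 + ∑ i ∈ sᶜ, x i ^ 2 = x ⬝ᵥ x := by
    rw [Finset.sum_add_sum_compl]; simp only [dotProduct, sq]
  have hs0 : 0 ≤ ∑ i ∈ s, x i ^ 2 := Finset.sum_nonneg fun i _ => sq_nonneg (x i)
  have hsc0 : 0 ≤ ∑ i ∈ sᶜ, x i ^ 2 := Finset.sum_nonneg fun i _ => sq_nonneg (x i)
  nlinarith [mul_le_of_le_one_left hs0 hp, mul_le_of_le_one_left hsc0 hm]

variable [DecidableEq ι]

theorem dotProduct_one_sub_vecMulVec_mulVec (v x : ι → ℝ) :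
    x ⬝ᵥ (1 - vecMulVec v v) *ᵥ x = x ⬝ᵥ x - (v ⬝ᵥ x) ^ 2 := by
  rw [sub_mulVec, one_mulVec, dotProduct_sub, dotProduct_vecMulVec_self_mulVec]

theorem posPart_dotProduct_posPart_le_one {v : ι → ℝ} (hv : Copositive (1 - vecMulVec v v)) :
    v⁺ ⬝ᵥ v⁺ ≤ 1 := by
  have hq := hv v⁺ fun i => posPart_nonneg (v i)
  rw [dotProduct_one_sub_vecMulVec_mulVec, dotProduct_posPart] at hq
  have h0 : 0 ≤ v⁺ ⬝ᵥ v⁺ := Finset.sum_nonneg fun i _ => mul_self_nonneg _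
  nlinarith

theorem negPart_dotProduct_negPart_le_one {v : ι → ℝ} (hv : Copositive (1 - vecMulVec v v)) :
    v⁻ ⬝ᵥ v⁻ ≤ 1 := by
  rw [← posPart_neg]
  exact posPart_dotProduct_posPart_le_one (by rwa [neg_vecMulVec, vecMulVec_neg, neg_neg])

theorem posSemidef_one_sub_vecMulVec_sub_vecMulVec {p m : ι → ℝ} (hp : p ⬝ᵥ p ≤ 1)
    (hm : m ⬝ᵥ m ≤ 1) (hpm : ∀ i, p i ≠ 0 → m i = 0) :
    (1 - vecMulVec p p - vecMulVec m m).PosSemidef := by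
  have hHerm (w : ι → ℝ) : (vecMulVec w w).IsHermitian := by
    simpa using (posSemidef_vecMulVec_self_star w).isHermitian
  refine .of_dotProduct_mulVec_nonneg ((isHermitian_one.sub (hHerm p)).sub (hHerm m)) fun x => ?_
  rw [star_trivial, sub_mulVec, dotProduct_sub, dotProduct_one_sub_vecMulVec_mulVec,
    dotProduct_vecMulVec_self_mulVec]
  linarith [sq_dotProduct_add_sq_dotProduct_le hp hm hpm x]

theorem isSPN_one_sub_vecMulVec {v : ι → ℝ} (hp : v⁺ ⬝ᵥ v⁺ ≤ 1) (hm : v⁻ ⬝ᵥ v⁻ ≤ 1) :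
    IsSPN (1 - vecMulVec v v) := by
  refine ⟨1 - vecMulVec v⁺ v⁺ - vecMulVec v⁻ v⁻, vecMulVec v⁺ v⁻ + vecMulVec v⁻ v⁺,
    posSemidef_one_sub_vecMulVec_sub_vecMulVec hp hm fun i hi => ?_, ?_, fun i j => ?_, ?_⟩
  · rw [Pi.posPart_apply, Ne, posPart_eq_zero, not_le] at hi
    rw [Pi.negPart_apply, negPart_eq_zero]
    exact hi.le
  · rw [IsSymm, transpose_add, transpose_vecMulVec, transpose_vecMulVec, add_comm]
  · exact add_nonneg (mul_nonneg (posPart_nonneg _) (negPart_nonneg _))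
      (mul_nonneg (negPart_nonneg _) (posPart_nonneg _))
  · conv_lhs => rw [← posPart_sub_negPart v]
    rw [sub_vecMulVec, vecMulVec_sub, vecMulVec_sub]
    abel

end

/-- For `v ∈ ℝⁿ` and `A = I - vvᵀ`, the following are equivalent:
(a) `A` is copositive; (b) `A` is SPN; (c) `‖v₋‖ ≤ 1` and `‖v₊‖ ≤ 1`. -/
theorem one_sub_vecMulVec_copositive_iff_isSPN_iff_norms
    (n : ℕ) (v : Fin n → ℝ) :
    (Copositive ((1 : Matrix (Fin n) (Fin n) ℝ) - Matrix.vecMulVec v v) ↔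
      IsSPN ((1 : Matrix (Fin n) (Fin n) ℝ) - Matrix.vecMulVec v v)) ∧
    (IsSPN ((1 : Matrix (Fin n) (Fin n) ℝ) - Matrix.vecMulVec v v) ↔
      (Real.sqrt (∑ i, max (-(v i)) 0 ^ 2) ≤ 1 ∧
        Real.sqrt (∑ i, max (v i) 0 ^ 2) ≤ 1)) := by
  have hneg : ∑ i, max (-(v i)) 0 ^ 2 = v⁻ ⬝ᵥ v⁻ := by simp only [dotProduct, sq]; rfl
  have hpos : ∑ i, max (v i) 0 ^ 2 = v⁺ ⬝ᵥ v⁺ := by simp only [dotProduct, sq]; rfl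
  rw [Real.sqrt_le_one, Real.sqrt_le_one, hneg, hpos]
  have norms_of_copositive (h : Copositive (1 - vecMulVec v v)) :
      v⁻ ⬝ᵥ v⁻ ≤ 1 ∧ v⁺ ⬝ᵥ v⁺ ≤ 1 :=
    ⟨negPart_dotProduct_negPart_le_one h, posPart_dotProduct_posPart_le_one h⟩
  have isSPN_of_norms (h : v⁻ ⬝ᵥ v⁻ ≤ 1 ∧ v⁺ ⬝ᵥ v⁺ ≤ 1) : IsSPN (1 - vecMulVec v v) :=
    isSPN_one_sub_vecMulVec h.2 h.1
  exact ⟨⟨isSPN_of_norms ∘ norms_of_copositive, IsSPN.copositive⟩,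
    ⟨norms_of_copositive ∘ IsSPN.copositive, isSPN_of_norms⟩⟩
end

section
/- If G is an SPN graph, then every subgraph H of G (a graph with V(H) ⊆ V(G) and E(H) ⊆ E(G)) is an SPN graph. -/
open Matrix

/-- The graph `G(A)` of a symmetric real matrix: `i ≠ j` are adjacent iff `A i j ≠ 0`. -/
def matrixGraph {ι : Type*} (A : Matrix ι ι ℝ) : SimpleGraph ι where
  Adj i j := i ≠ j ∧ (A i j ≠ 0 ∨ A j i ≠ 0)
  symm := by
    constructor
    intro i j h
    exact ⟨h.1.symm, h.2.symm⟩
  loopless := by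
    constructor
    intro i h
    exact h.1 rfl

/-- A graph `G` is an *SPN graph* if every copositive symmetric real matrix whose graph
is isomorphic to `G` is SPN. -/
def IsSPNGraph {V : Type*} [Fintype V] (G : SimpleGraph V) : Prop :=
  ∀ (n : ℕ) (A : Matrix (Fin n) (Fin n) ℝ), A.IsSymm → Copositive A →
    Nonempty (matrixGraph A ≃g G) → IsSPN A

/-!
Embed `H` into `G`, extend a copositive matrix `A` with graph `H` by zeros to the vertices of
`G`, and put `ε > 0` on the edges of `G` that the extension misses. The result is copositive
with graph `G`, hence SPN, and it tends to the extension of `A` as `ε → 0`. The SPN matrices form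
a closed set (in a decomposition `P + N` the PSD part is bounded by the diagonal), so the
extension is SPN, and so is its principal submatrix `A`.
-/

open Filter Topology

section Matrix

variable {ι κ : Type*} [Fintype ι] [Fintype κ]

theorem Matrix.PosSemidef.two_mul_abs_apply_le {P : Matrix ι ι ℝ} (hP : P.PosSemidef)
    (i j : ι) : 2 * |P i j| ≤ P i i + P j j := by
  classical
  have hsymm : P j i = P i j := hP.1.apply i j
  have key (s : ℝ) : 0 ≤ P i i + 2 * s * P i j + s ^ 2 * P j j := by
    have := hP.dotProduct_mulVec_nonneg (Pi.single i 1 + s • Pi.single j 1)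
    simp only [star_trivial, mulVec_add, mulVec_smul, mulVec_single, dotProduct_add,
      add_dotProduct, dotProduct_smul, smul_dotProduct, single_dotProduct, op_smul_eq_mul,
      smul_eq_mul, col_apply, hsymm] at this
    linear_combination this
  rcases abs_cases (P i j) with ⟨h, -⟩ | ⟨h, -⟩ <;> rw [h]
  · linarith [key (-1)]
  · linarith [key 1]

theorem isClosed_setOf_posSemidef : IsClosed {P : Matrix ι ι ℝ | P.PosSemidef} := by
  simp only [posSemidef_iff_dotProduct_mulVec, Set.ofPred_and, Set.ofPred_forall]
  exact (isClosed_eq continuous_id.matrix_conjTranspose continuous_id).inter <|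
    isClosed_iInter fun x => isClosed_le continuous_const <|
      continuous_const.dotProduct (continuous_id.matrix_mulVec continuous_const)

instance : FirstCountableTopology (Matrix ι κ ℝ) :=
  inferInstanceAs (FirstCountableTopology (ι → κ → ℝ))

theorem isClosed_setOf_isSPN : IsClosed {A : Matrix ι ι ℝ | IsSPN A} := by
  refine IsSeqClosed.isClosed fun {C A} hC hCA => ?_
  choose P N hP hN hNn hCPN using hC
  let r (i j : ι) : ℝ := (A i i + A j j) / 2 + 1
  let box : Set (Matrix ι ι ℝ) :=
    Set.univ.pi fun i => Set.univ.pi fun j => Set.Icc (-r i j) (r i j)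
  have hbox : IsCompact box := isCompact_univ_pi fun i => isCompact_univ_pi fun j => isCompact_Icc
  have hPbox : ∀ᶠ k in atTop, P k ∈ box := by
    have hdiag : ∀ᶠ k in atTop, ∀ i, C k i i < A i i + 1 := eventually_all.2 fun i =>
      (((continuous_id.matrix_elem i i).tendsto A).comp hCA).eventually
        (gt_mem_nhds (lt_add_one _))
    filter_upwards [hdiag] with k hk i _ j _
    rw [Set.mem_Icc, ← abs_le, show r i j = (A i i + A j j) / 2 + 1 from rfl]
    -- `N k` has a nonnegative diagonal, so the diagonal of `C k` bounds that of `P k`.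
    have hPN (i : ι) : C k i i = P k i i + N k i i := congrFun (congrFun (hCPN k) i) i
    linarith [(hP k).two_mul_abs_apply_le i j, hk i, hk j, hPN i, hPN j, hNn k i i, hNn k j j]
  obtain ⟨Q, -, φ, hφ, hPQ⟩ := hbox.tendsto_subseq' hPbox.frequently
  have hNQ : Tendsto (N ∘ φ) atTop (𝓝 (A - Q)) := by
    have hN : N = C - P := funext fun k => eq_sub_of_add_eq' (hCPN k).symm
    rw [hN]
    exact (hCA.comp hφ.tendsto_atTop).sub hPQ
  refine ⟨Q, A - Q, isClosed_setOf_posSemidef.mem_of_tendsto hPQ (.of_forall fun k => hP (φ k)),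
    ?_, fun i j => ?_, (add_sub_cancel _ _).symm⟩
  · exact (isClosed_eq continuous_id.matrix_transpose continuous_id).mem_of_tendsto hNQ
      (.of_forall fun k => hN (φ k))
  · exact (isClosed_le continuous_const (continuous_id.matrix_elem i j)).mem_of_tendsto hNQ
      (.of_forall fun k => hNn (φ k) i j)

end Matrix

section Copositive

variable {ι κ : Type*} [Fintype ι] [Fintype κ]

theorem copositive_of_nonneg {A : Matrix ι ι ℝ} (hA : ∀ i j, 0 ≤ A i j) : Copositive A :=
  fun _ hx => Finset.sum_nonneg fun i _ =>
    mul_nonneg (hx i) (Finset.sum_nonneg fun j _ => mul_nonneg (hA i j) (hx j))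

theorem Copositive.add {A B : Matrix ι ι ℝ} (hA : Copositive A) (hB : Copositive B) :
    Copositive (A + B) := fun x hx => by
  rw [add_mulVec, dotProduct_add]
  exact add_nonneg (hA x hx) (hB x hx)

theorem Copositive.submatrix_equiv {A : Matrix ι ι ℝ} (hA : Copositive A) (e : κ ≃ ι) :
    Copositive (A.submatrix e e) := fun x hx => by
  rw [submatrix_mulVec_equiv, ← comp_equiv_symm_dotProduct]
  exact hA _ fun i => hx _

theorem Copositive.fromBlocks_zero {A : Matrix ι ι ℝ} {D : Matrix κ κ ℝ} (hA : Copositive A)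
    (hD : Copositive D) : Copositive (fromBlocks A 0 0 D) := fun x hx => by
  rw [← Sum.elim_comp_inl_inr x, fromBlocks_mulVec]
  simp only [zero_mulVec, add_zero, zero_add, sumElim_dotProduct_sumElim]
  exact add_nonneg (hA _ fun i => hx _) (hD _ fun i => hx _)

end Copositive

theorem IsSPN.submatrix {ι κ : Type*} [Fintype ι] [Fintype κ] {A : Matrix ι ι ℝ}
    (hA : IsSPN A) (e : κ → ι) : IsSPN (A.submatrix e e) := by
  obtain ⟨P, N, hP, hN, hNn, rfl⟩ := hA
  exact ⟨P.submatrix e e, N.submatrix e e, hP.submatrix e, hN.submatrix e, fun i j => hNn _ _,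
    rfl⟩

section MatrixGraph

variable {ι κ : Type*}

@[simp]
theorem matrixGraph_adj {A : Matrix ι ι ℝ} {i j : ι} :
    (matrixGraph A).Adj i j ↔ i ≠ j ∧ (A i j ≠ 0 ∨ A j i ≠ 0) :=
  Iff.rfl

def matrixGraphSubmatrixIso (A : Matrix ι ι ℝ) (e : κ ≃ ι) :
    matrixGraph (A.submatrix e e) ≃g matrixGraph A :=
  ⟨e, by simp⟩

open Classical in
theorem matrixGraph_add_smul_adjMatrix_sdiff (A : Matrix ι ι ℝ) (G : SimpleGraph ι) {ε : ℝ}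
    (hε : ε ≠ 0) :
    matrixGraph (A + ε • (G \ matrixGraph A).adjMatrix ℝ) = matrixGraph A ⊔ G := by
  have hentry (a b : ι) : (A + ε • (G \ matrixGraph A).adjMatrix ℝ) a b =
      A a b + if G.Adj a b ∧ ¬(matrixGraph A).Adj a b then ε else 0 := by
    simp [SimpleGraph.adjMatrix_apply]
  ext u v
  rw [matrixGraph_adj, hentry, hentry, SimpleGraph.sup_adj]
  by_cases hA : (matrixGraph A).Adj u v
  · simp only [hA, hA.symm, not_true_eq_false, and_false, ↓reduceIte, add_zero, true_or,
      iff_true]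
    exact hA
  · rcases eq_or_ne u v with rfl | huv
    · simp
    · have h0 : A u v = 0 ∧ A v u = 0 := by simpa [huv] using hA
      simp [h0, huv, hε, G.adj_comm v u]

end MatrixGraph

section SPNGraph

variable {V ι κ : Type*} [Fintype V] [Fintype ι] [Fintype κ] {G : SimpleGraph V}

theorem IsSPNGraph.isSPN (hG : IsSPNGraph G) {A : Matrix ι ι ℝ} (hA : A.IsSymm)
    (hc : Copositive A) (e : matrixGraph A ≃g G) : IsSPN A := by
  let τ := (Fintype.equivFin ι).symm
  have h := hG _ (A.submatrix τ τ) (hA.submatrix τ) (hc.submatrix_equiv τ)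
    ⟨(matrixGraphSubmatrixIso A τ).trans e⟩
  simpa using h.submatrix τ.symm

theorem IsSPNGraph.isSPN_of_le (hG : IsSPNGraph G) {G' : SimpleGraph ι} (e : G' ≃g G)
    {A : Matrix ι ι ℝ} (hA : A.IsSymm) (hc : Copositive A) (hle : matrixGraph A ≤ G') :
    IsSPN A := by
  classical
  let M := (G' \ matrixGraph A).adjMatrix ℝ
  have hlim : Tendsto (fun ε : ℝ => A + ε • M) (𝓝[>] 0) (𝓝 A) :=
    ((continuous_const.add (continuous_id.smul continuous_const)).tendsto' 0 A
      (by simp)).mono_left nhdsWithin_le_nhds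
  refine isClosed_setOf_isSPN.mem_of_tendsto hlim
    (eventually_nhdsWithin_of_forall fun ε (hε : 0 < ε) => ?_)
  refine hG.isSPN (hA.add ((SimpleGraph.isSymm_adjMatrix _).smul ε))
    (hc.add (copositive_of_nonneg fun i j => ?_)) ?_
  · simp only [Matrix.smul_apply, smul_eq_mul, M, SimpleGraph.adjMatrix_apply]
    split_ifs <;> linarith
  · rw [matrixGraph_add_smul_adjMatrix_sdiff A G' hε.ne', sup_eq_right.2 hle]
    exact e

theorem IsSPNGraph.isSPN_of_injective (hG : IsSPNGraph G) {A : Matrix κ κ ℝ} (hA : A.IsSymm)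
    (hc : Copositive A) (φ : matrixGraph A →g G) (hφ : Function.Injective φ) : IsSPN A := by
  classical
  let σ : κ ⊕ ↥(Set.range φ)ᶜ ≃ V :=
    ((Equiv.ofInjective φ hφ).sumCongr (Equiv.refl _)).trans (Equiv.Set.sumCompl _)
  have hle : matrixGraph (fromBlocks A 0 0 0) ≤ G.comap σ := by
    rintro (i | u) (j | v) hadj
    · simp only [matrixGraph_adj, fromBlocks_apply₁₁, ne_eq, Sum.inl.injEq] at hadj
      exact φ.map_rel hadj
    all_goals simp at hadj
  have h := hG.isSPN_of_le (SimpleGraph.Iso.comap σ G) (hA.fromBlocks (by simp) isSymm_zero)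
    (hc.fromBlocks_zero (copositive_of_nonneg fun _ _ => le_rfl)) hle
  exact h.submatrix Sum.inl

end SPNGraph

/-- Every subgraph of an SPN graph is an SPN graph. Here a subgraph `H`
of `G` is given by an injective map on vertices carrying edges of `H` to edges of `G`. -/
theorem isSPNGraph_of_subgraph
    {V W : Type*} [Fintype V] [Fintype W]
    (G : SimpleGraph V) (H : SimpleGraph W)
    (f : W ↪ V) (hf : ∀ i j, H.Adj i j → G.Adj (f i) (f j))
    (hG : IsSPNGraph G) :
    IsSPNGraph H := by
  rintro n A hA hc ⟨e⟩
  exact hG.isSPN_of_injective hA hc ((⟨f, hf _ _⟩ : H →g G).comp e.toHom)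
    (f.injective.comp e.injective)
end
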